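/- Let β, b ∈ ℕ^m and A ∈ ℕ^{m×n} with columns A_1,…,A_n satisfy b ≤ β and A_k ≤ β for all k, and let Θ and 𝐛 be as below. If there exists a real vector 𝐲 ≥ 0 with Θ𝐲 = 𝐛, then there exists a vector ŷ with all entries in ℕ such that Θŷ = 𝐛. -/
import Mathlib

/-- Row index set: vectors `w ∈ ℕ^m` with `w ≤ β` (entrywise). -/
abbrev RowIdx (m : ℕ) (β : Fin m → ℕ) : Type := ∀ j : Fin m, Fin (β j + 1)

/-- Column index set: pairs `(k, u)` with `1 ≤ k ≤ n` and `u ∈ ℕ^m`, `u ≤ β - A_k`. -/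
abbrev ColIdx (m n : ℕ) (β : Fin m → ℕ) (A : Matrix (Fin m) (Fin n) ℕ) : Type :=
  Σ k : Fin n, ∀ j : Fin m, Fin (β j - A j k + 1)

/-- The network matrix `Θ`: `Θ[w;(k,u)] = -1` if `w = u`, `+1` if `w = u + A_k`,
and `0` otherwise. -/
noncomputable def theta (m n : ℕ) (β : Fin m → ℕ) (A : Matrix (Fin m) (Fin n) ℕ) :
    Matrix (RowIdx m β) (ColIdx m n β A) ℝ := Matrix.of fun w c =>
  if (fun j => (w j : ℕ)) = (fun j => (c.2 j : ℕ)) then -1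
  else if (fun j => (w j : ℕ)) = (fun j => (c.2 j : ℕ) + A j c.1) then 1 else 0

/-- The vector `𝐛`: `𝐛[w] = (1 if w = b else 0) - (1 if w = 0 else 0)`. -/
noncomputable def bvec (m : ℕ) (β b : Fin m → ℕ) : RowIdx m β → ℝ := fun w =>
  (if (fun j => (w j : ℕ)) = b then 1 else 0)
    - (if (fun j => (w j : ℕ)) = (fun _ => (0 : ℕ)) then 1 else 0)

section Aux

variable {m n : ℕ} {β : Fin m → ℕ} {A : Matrix (Fin m) (Fin n) ℕ}

/-- Reachability from `0` by adding nonzero columns of `A`, staying within bounds. -/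
inductive Reach (β : Fin m → ℕ) (A : Matrix (Fin m) (Fin n) ℕ) : (Fin m → ℕ) → Prop
  | zero : Reach β A (fun _ => 0)
  | step (w : Fin m → ℕ) (k : Fin n) (hw : ∀ j, w j ≤ β j - A j k)
      (hk : (fun j => A j k) ≠ (fun _ => (0 : ℕ))) (h : Reach β A w) :
      Reach β A (fun j => w j + A j k)

lemma row_eq_iff (v w : RowIdx m β) :
    ((fun j => (v j : ℕ)) = (fun j => (w j : ℕ))) ↔ v = w := by
  constructor
  · intro h; funext j; exact Fin.ext (congrFun h j)
  · rintro rfl; rfl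

/-- From reachability, an integer solution. -/
lemma exists_nat_sol {w : Fin m → ℕ} (h : Reach β A w) :
    ∃ yhat : ColIdx m n β A → ℕ,
      (theta m n β A).mulVec (fun c => (yhat c : ℝ)) =
        fun v => (if (fun j => ((v j : ℕ))) = w then 1 else 0)
          - (if (fun j => ((v j : ℕ))) = (fun _ => (0 : ℕ)) then 1 else 0) := by
  classical
  induction h with
  | zero =>
      refine ⟨0, ?_⟩
      funext v
      simp [Matrix.mulVec, dotProduct]
  | step w k hw hk h ih =>
      obtain ⟨yhat, hy⟩ := ih
      set c0 : ColIdx m n β A := ⟨k, fun j => ⟨w j, by have := hw j; omega⟩⟩ with hc0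
      refine ⟨fun c => yhat c + (if c = c0 then 1 else 0), ?_⟩
      funext v
      have hIH := congrFun hy v
      simp only [Matrix.mulVec, dotProduct] at hIH ⊢
      push_cast
      have hsplit : ∑ c : ColIdx m n β A,
          theta m n β A v c * ((yhat c : ℝ) + (if c = c0 then 1 else 0))
          = (∑ c : ColIdx m n β A, theta m n β A v c * (yhat c : ℝ))
            + theta m n β A v c0 := by
        simp only [mul_add, Finset.sum_add_distrib, mul_ite, mul_one, mul_zero]
        congr 1
        simp [Finset.sum_ite_eq']
      rw [hsplit, hIH]
      have hθ0 : theta m n β A v c0 =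
          (if (fun j => ((v j : ℕ))) = w then (-1 : ℝ)
            else if (fun j => ((v j : ℕ))) = (fun j => w j + A j k) then 1 else 0) := by
        simp only [theta, Matrix.of_apply, hc0]
      have hne : w ≠ (fun j => w j + A j k) := by
        intro hcon
        apply hk
        funext j
        have := congrFun hcon j
        omega
      rw [hθ0]
      by_cases h1 : (fun j => ((v j : ℕ))) = w
      · rw [h1] at *
        simp [hne, Ne.symm hne]
        ring
      · by_cases h2 : (fun j => ((v j : ℕ))) = (fun j => w j + A j k)
        · simp [h1, h2, Ne.symm hne]
          ring
        · simp [h1, h2]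

/-- If a nonnegative real solution exists, then `b` is reachable. -/
lemma reach_of_real_sol (b : Fin m → ℕ) (hb : ∀ j, b j ≤ β j) (hA : ∀ k j, A j k ≤ β j)
    (y : ColIdx m n β A → ℝ) (hy : ∀ c, 0 ≤ y c)
    (hΘ : (theta m n β A).mulVec y = bvec m β b) : Reach β A b := by
  classical
  by_contra hnb
  set T : Finset (RowIdx m β) :=
    Finset.univ.filter (fun v => ¬ Reach β A (fun j => (v j : ℕ))) with hT
  set vb : RowIdx m β := fun j => ⟨b j, by have := hb j; omega⟩ with hvb
  set v0 : RowIdx m β := fun j => ⟨0, by omega⟩ with hv0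
  have hcb : (fun j => ((vb j : ℕ))) = b := rfl
  have hc0 : (fun j => ((v0 j : ℕ))) = (fun _ => (0 : ℕ)) := rfl
  have hbT : vb ∈ T := by
    simp only [hT, Finset.mem_filter, Finset.mem_univ, true_and]
    rw [hcb]; exact hnb
  have h0T : v0 ∉ T := by
    simp only [hT, Finset.mem_filter, Finset.mem_univ, true_and, not_not]
    rw [hc0]; exact Reach.zero
  have hvb0 : vb ≠ v0 := by
    intro hcon; rw [hcon] at hbT; exact h0T hbT
  -- sum of bvec over T is 1
  have hsum1 : ∑ v ∈ T, bvec m β b v = 1 := by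
    have hrw : ∀ v : RowIdx m β, bvec m β b v =
        (if v = vb then (1 : ℝ) else 0) - (if v = v0 then 1 else 0) := by
      intro v
      show (if (fun j => ((v j : ℕ))) = b then (1:ℝ) else 0)
        - (if (fun j => ((v j : ℕ))) = (fun _ => (0 : ℕ)) then 1 else 0) = _
      exact congrArg₂ Sub.sub (if_congr (row_eq_iff v vb) rfl rfl)
        (if_congr (row_eq_iff v v0) rfl rfl)
    simp only [hrw]
    rw [Finset.sum_sub_distrib, Finset.sum_ite_eq' T vb (fun _ => (1:ℝ)),
      Finset.sum_ite_eq' T v0 (fun _ => (1:ℝ))]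
    simp [hbT, h0T]
  -- sum of Θy over T is ≤ 0
  have hsum2 : ∑ v ∈ T, (theta m n β A).mulVec y v ≤ 0 := by
    simp only [Matrix.mulVec, dotProduct]
    rw [Finset.sum_comm]
    apply Finset.sum_nonpos
    intro c _
    rw [← Finset.sum_mul]
    rcases c with ⟨k, u⟩
    set vu : RowIdx m β := fun j => ⟨(u j : ℕ), by have := (u j).isLt; omega⟩ with hvu
    set vh : RowIdx m β :=
      fun j => ⟨(u j : ℕ) + A j k, by have := (u j).isLt; have := hA k j; omega⟩ with hvh
    have hθ : ∀ v : RowIdx m β, theta m n β A v ⟨k, u⟩ =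
        if v = vu then (-1 : ℝ) else if v = vh then 1 else 0 := by
      intro v
      show (if (fun j => ((v j : ℕ))) = (fun j => ((u j : ℕ))) then (-1:ℝ)
        else if (fun j => ((v j : ℕ))) = (fun j => ((u j : ℕ)) + A j k) then 1 else 0) = _
      exact if_congr (row_eq_iff v vu) rfl (if_congr (row_eq_iff v vh) rfl rfl)
    have hsumθ : ∑ v ∈ T, theta m n β A v ⟨k, u⟩ ≤ 0 := by
      by_cases hvv : vu = vh
      · have : ∀ v : RowIdx m β, theta m n β A v ⟨k, u⟩ =
            if v = vu then (-1 : ℝ) else 0 := by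
          intro v
          rw [hθ v]
          by_cases hv : v = vu
          · simp [hv]
          · simp [hv, hvv ▸ hv]
        simp only [this]
        rw [Finset.sum_ite_eq' T vu (fun _ => (-1:ℝ))]
        split <;> norm_num
      · have hAk : (fun j => A j k) ≠ (fun _ => (0 : ℕ)) := by
          intro hcon
          apply hvv
          funext j
          have h0 : A j k = 0 := by simpa using congrFun hcon j
          exact Fin.ext (by simp [hvu, hvh, h0])
        have hclosed : vu ∉ T → vh ∉ T := by
          intro hu
          simp only [hT, Finset.mem_filter, Finset.mem_univ, true_and, not_not] at hu ⊢
          exact Reach.step (fun j => (u j : ℕ)) k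
            (fun j => by show (u j : ℕ) ≤ β j - A j k; have := (u j).isLt; omega) hAk hu
        have : ∀ v : RowIdx m β, theta m n β A v ⟨k, u⟩ =
            (if v = vh then (1:ℝ) else 0) - (if v = vu then 1 else 0) := by
          intro v
          rw [hθ v]
          by_cases hv : v = vu
          · simp [hv, hvv]
          · by_cases hv2 : v = vh <;> simp [hv, hv2, Ne.symm hvv]
        simp only [this]
        rw [Finset.sum_sub_distrib, Finset.sum_ite_eq' T vh (fun _ => (1:ℝ)),
          Finset.sum_ite_eq' T vu (fun _ => (1:ℝ))]
        by_cases huT : vu ∈ T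
        · by_cases hhT : vh ∈ T <;> simp [huT, hhT]
        · have := hclosed huT
          simp [huT, this]
    exact mul_nonpos_of_nonpos_of_nonneg hsumθ (hy ⟨k, u⟩)
  rw [hΘ, hsum1] at hsum2
  linarith

end Aux

/-- If `Θ𝐲 = 𝐛` has a nonnegative real solution, then it has a nonnegative
integer solution. -/
theorem stmt_17 (m n : ℕ) (hm : 0 < m) (hn : 0 < n)
    (A : Matrix (Fin m) (Fin n) ℕ) (β b : Fin m → ℕ)
    (hb : ∀ j, b j ≤ β j) (hA : ∀ k j, A j k ≤ β j)
    (y : ColIdx m n β A → ℝ) (hy : ∀ c, 0 ≤ y c)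
    (hΘ : (theta m n β A).mulVec y = bvec m β b) :
    ∃ yhat : ColIdx m n β A → ℕ,
      (theta m n β A).mulVec (fun c => (yhat c : ℝ)) = bvec m β b := by
  have hreach : Reach β A b := reach_of_real_sol b hb hA y hy hΘ
  obtain ⟨yhat, hyhat⟩ := exists_nat_sol hreach
  exact ⟨yhat, hyhat⟩
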